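/- Let E/F be a finite Galois extension of fields whose Galois group is cyclic, generated by α, and let ρ : G → GL(d,E) be a representation of a group G. Suppose A ∈ GL(d,E) and the matrix C = A·(A^α)⁻¹ satisfies C⁻¹ρ(g)C = ρ(g)^α for all g ∈ G. Then every entry of A⁻¹ρ(g)A lies in F, for all g ∈ G. -/

import Mathlib

/-- Since `C * A^f = A`, applying `f` to `A⁻¹ M A` gives `(A^f)⁻¹ C⁻¹ M C A^f = A⁻¹ M A`. -/
theorem Matrix.map_inv_mul_mul_eq_self {n R : Type*} [Fintype n] [DecidableEq n] [CommRing R]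
    (f : R →+* R) (A : GL n R) (M C : Matrix n n R)
    (hCdef : C = (A : Matrix n n R) * ((A : Matrix n n R).map f)⁻¹)
    (hC : C⁻¹ * M * C = M.map f) :
    (((A⁻¹ : GL n R) : Matrix n n R) * M * A).map f = ((A⁻¹ : GL n R) : Matrix n n R) * M * A := by
  set B := Matrix.GeneralLinearGroup.map f A
  have hB : (A : Matrix n n R).map f = B := rfl
  have hBinv : ((A⁻¹ : GL n R) : Matrix n n R).map f = ((B⁻¹ : GL n R) : Matrix n n R) := by
    rw [← Matrix.GeneralLinearGroup.map_inv]; rfl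
  have hCunit : C = ((A * B⁻¹ : GL n R) : Matrix n n R) := by
    rw [hCdef, hB, Units.val_mul, Matrix.coe_units_inv]
  rw [hCunit, ← Matrix.coe_units_inv, _root_.mul_inv_rev, inv_inv] at hC
  rw [Matrix.map_mul, Matrix.map_mul, hBinv, hB, ← hC]
  simp only [Units.val_mul, mul_assoc, Units.inv_mul, Units.inv_mul_cancel_left, mul_one]

theorem IsGalois.mem_range_algebraMap_of_fixed_by_generator {F E : Type*} [Field F] [Field E]
    [Algebra F E] [IsGalois F E] {α : E ≃ₐ[F] E} (hα : ∀ σ : E ≃ₐ[F] E, σ ∈ Subgroup.zpowers α)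
    {x : E} (hx : α x = x) : x ∈ (algebraMap F E).range :=
  (InfiniteGalois.mem_range_algebraMap_iff_fixed x).mpr fun σ ↦
    Subgroup.zpowers_le.mpr (show α ∈ MulAction.stabilizer _ x from hx) (hα σ)

theorem intertwiner_from_A_rewrites_over_F_general
    {F E : Type*} [Field F] [Field E] [Algebra F E]
    [IsGalois F E]
    (α : E ≃ₐ[F] E)
    (hgen : ∀ σ : E ≃ₐ[F] E, σ ∈ Subgroup.zpowers α)
    {G : Type*} [Group G] {d : ℕ}
    (ρ : G →* GL (Fin d) E)
    (A : GL (Fin d) E)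
    (C : Matrix (Fin d) (Fin d) E)
    (hCdef : C = (A : Matrix (Fin d) (Fin d) E)
        * ((A : Matrix (Fin d) (Fin d) E).map ⇑α)⁻¹)
    (hC : ∀ g : G, C⁻¹ * (ρ g : Matrix (Fin d) (Fin d) E) * C
        = (ρ g : Matrix (Fin d) (Fin d) E).map ⇑α) :
    ∀ g : G, ∀ i j : Fin d,
      ((A⁻¹ * ρ g * A : GL (Fin d) E) : Matrix (Fin d) (Fin d) E) i j
        ∈ (algebraMap F E).range := by
  intro g i j
  have hfixed := Matrix.map_inv_mul_mul_eq_self (α : E →+* E) A (ρ g) C hCdef (hC g)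
  exact IsGalois.mem_range_algebraMap_of_fixed_by_generator hgen (congrFun₂ hfixed i j)

/-- If `A ∈ GL(d,E)` and `C = A·(A^α)⁻¹` satisfies `C⁻¹ρ(g)C = ρ(g)^α` for all
`g ∈ G`, then every entry of `A⁻¹ρ(g)A` lies in `F`, for all `g ∈ G`. -/
theorem intertwiner_from_A_rewrites_over_F
    {F E : Type*} [Field F] [Field E] [Algebra F E]
    [FiniteDimensional F E] [IsGalois F E]
    (α : E ≃ₐ[F] E)
    (hgen : ∀ σ : E ≃ₐ[F] E, σ ∈ Subgroup.zpowers α)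
    {G : Type*} [Group G] {d : ℕ}
    (ρ : G →* GL (Fin d) E)
    (A : GL (Fin d) E)
    (C : Matrix (Fin d) (Fin d) E)
    (hCdef : C = (A : Matrix (Fin d) (Fin d) E)
        * ((A : Matrix (Fin d) (Fin d) E).map ⇑α)⁻¹)
    (hC : ∀ g : G, C⁻¹ * (ρ g : Matrix (Fin d) (Fin d) E) * C
        = (ρ g : Matrix (Fin d) (Fin d) E).map ⇑α) :
    ∀ g : G, ∀ i j : Fin d,
      ((A⁻¹ * ρ g * A : GL (Fin d) E) : Matrix (Fin d) (Fin d) E) i j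
        ∈ (algebraMap F E).range :=
  intertwiner_from_A_rewrites_over_F_general α hgen ρ A C hCdef hC
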